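/- Let d = 1 and Ω = [−3,3] ⊂ ℝ, and endow the set P(Ω) of Borel probability measures on Ω with the 1-Wasserstein topology. There exists a continuous, support-preserving map f : P(Ω) → P(Ω) such that there does not exist any continuous map G : P(Ω) × Ω → Ω with f(μ) = G(μ,·)_# μ for all μ ∈ P(Ω). -/

import Mathlib

open MeasureTheory Filter Set
open scoped ENNReal

/-- The 1-Wasserstein distance, via Kantorovich–Rubinstein duality. -/
noncomputable def W1 {E : Type*} [MeasurableSpace E] [PseudoMetricSpace E]
    (μ ν : Measure E) : ℝ :=
  ⨆ φ : {φ : E → ℝ // LipschitzWith 1 φ}, ((∫ x, φ.1 x ∂μ) - ∫ x, φ.1 x ∂ν)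

/-- `P(Ω)`: the Borel probability measures supported in `Ω`. -/
def ProbOn {E : Type*} [MeasurableSpace E] (Ω : Set E) : Set (Measure E) :=
  {μ | IsProbabilityMeasure μ ∧ μ Ωᶜ = 0}

/-- A map `f : P(Ω) → P(Ω)` is support-preserving: for all `x₁, …, xₙ ∈ Ω`, writing
`μ = ∑ (1/n) δ_{xᵢ}`, we have `f(μ) = ∑ (1/n) δ_{yᵢ}` for some `y₁, …, yₙ ∈ Ω` with
`xⱼ = xᵢ → yⱼ = yᵢ`. -/
def SupportPreservingProb {E : Type*} [MeasurableSpace E]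
    (Ω : Set E) (f : Measure E → Measure E) : Prop :=
  ∀ n : ℕ, 0 < n → ∀ x : Fin n → E, (∀ i, x i ∈ Ω) →
    ∃ y : Fin n → E, (∀ i, y i ∈ Ω) ∧
      f (∑ i, ((n : ℝ≥0∞))⁻¹ • Measure.dirac (x i))
        = ∑ i, ((n : ℝ≥0∞))⁻¹ • Measure.dirac (y i) ∧
      ∀ i j, x i = x j → y i = y j
/-!
At each dyadic scale `j` the map pushes points near `2⁻ʲ` up by a bump of height `1`, but only
when `μ` puts mass of order at most `2⁻ʲ` near `2⁻ʲ`. The mass moved at scale `j` is therefore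
`O(2⁻ʲ)`, so the scales beyond `J` change the image by `O(2⁻ᴶ)` in `W1`, uniformly in `μ`, while
the finitely many remaining scales depend Lipschitz-continuously on `μ`: the map is continuous.

For the measure with mass `3/4` at `0` and mass `2⁻ʲ/8` at each `2⁻ʲ`, every scale is active: the
map sends `2⁻ʲ` to `2⁻ʲ + 1` and fixes `0`. A map `G(μ, ·)` realising it must also fix the heavy
atom `0` and send some atom `2^(-jₖ)` to each `2⁻ᵏ + 1`. The `jₖ` are distinct, so `jₖ → ∞`, and
continuity of `G(μ, ·)` at `0` would give `0 = 1`.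
-/

open Metric Topology
open scoped NNReal

section Wasserstein

variable {E : Type*} [MeasurableSpace E] {Ω : Set E} {μ ν : Measure E}

theorem integrable_of_forall_mem_abs_le (hμ : μ ∈ ProbOn Ω) {g : E → ℝ}
    (hg : AEStronglyMeasurable g μ) {C : ℝ} (hC : ∀ x ∈ Ω, |g x| ≤ C) : Integrable g μ := by
  have := hμ.1
  refine Integrable.of_bound hg C ?_
  filter_upwards [mem_ae_iff.2 hμ.2] with x hx using hC x hx

theorem LipschitzWith.integrable_comp_of_mem_probOn {F : Type*} [PseudoMetricSpace F]
    [MeasurableSpace F] [OpensMeasurableSpace F] (hμ : μ ∈ ProbOn Ω) {K : ℝ≥0} {ψ : F → ℝ}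
    (hψ : LipschitzWith K ψ) {u : E → F} (hu : Measurable u) (hΩ : Bornology.IsBounded (u '' Ω)) :
    Integrable (fun x => ψ (u x)) μ := by
  obtain ⟨C, hC⟩ := isBounded_iff_forall_norm_le.1 (hψ.isBounded_image hΩ)
  exact integrable_of_forall_mem_abs_le hμ (hψ.continuous.measurable.comp hu).aestronglyMeasurable
    fun x hx => hC _ (mem_image_of_mem ψ (mem_image_of_mem u hx))

theorem measure_singleton_le_map_apply_singleton {F : Type*} [MeasurableSpace F] {f : E → F}
    (hf : AEMeasurable f μ) (x : E) : μ {x} ≤ μ.map f {f x} :=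
  (measure_mono (singleton_subset_iff.2 (mem_preimage.2 (mem_singleton _)))).trans
    (Measure.le_map_apply hf _)

theorem integral_comp_sub_integral_comp_le {F : Type*} [PseudoMetricSpace F] {φ : F → ℝ}
    (hφ : LipschitzWith 1 φ) {u v : E → F}
    (hu : Integrable (fun x => φ (u x)) μ) (hv : Integrable (fun x => φ (v x)) μ)
    (huv : Integrable (fun x => dist (u x) (v x)) μ) :
    ∫ x, φ (u x) ∂μ - ∫ x, φ (v x) ∂μ ≤ ∫ x, dist (u x) (v x) ∂μ := by
  rw [← integral_sub hu hv]
  refine integral_mono (hu.sub hv) huv fun x => (le_abs_self _).trans ?_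
  simpa [← Real.dist_eq] using hφ.dist_le_mul (u x) (v x)

variable [PseudoMetricSpace E]

instance : Nonempty {φ : E → ℝ // LipschitzWith 1 φ} := ⟨⟨0, LipschitzWith.const' 0⟩⟩

theorem W1_self (μ : Measure E) : W1 μ μ = 0 := by
  simp only [W1, sub_self, ciSup_const]

theorem W1_le_of_forall {c : ℝ}
    (h : ∀ φ : E → ℝ, LipschitzWith 1 φ → ∫ x, φ x ∂μ - ∫ x, φ x ∂ν ≤ c) : W1 μ ν ≤ c :=
  ciSup_le fun φ => h φ.1 φ.2

variable [OpensMeasurableSpace E]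

theorem LipschitzWith.integrable_of_mem_probOn (hΩ : Bornology.IsBounded Ω)
    (hμ : μ ∈ ProbOn Ω) {K : ℝ≥0} {ψ : E → ℝ} (hψ : LipschitzWith K ψ) : Integrable ψ μ :=
  hψ.integrable_comp_of_mem_probOn hμ measurable_id (by rwa [image_id'])

theorem abs_integral_sub_le_of_subset_closedBall {x₀ : E} {r : ℝ}
    (hΩ : Ω ⊆ closedBall x₀ r) (hμ : μ ∈ ProbOn Ω) {φ : E → ℝ} (hφ : LipschitzWith 1 φ) :
    |∫ x, φ x ∂μ - φ x₀| ≤ r := by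
  have := hμ.1
  have hint := hφ.integrable_of_mem_probOn (isBounded_closedBall.subset hΩ) hμ
  have h := norm_integral_le_of_norm_le_const (μ := μ) (C := r) (f := fun x => φ x - φ x₀) ?_
  · rw [integral_sub hint (integrable_const _)] at h
    simpa using h
  filter_upwards [mem_ae_iff.2 hμ.2] with x hx
  simpa [← dist_eq_norm] using (hφ.dist_le_mul x x₀).trans (by simpa using hΩ hx)

theorem bddAbove_W1 (hΩ : Bornology.IsBounded Ω) (hμ : μ ∈ ProbOn Ω) (hν : ν ∈ ProbOn Ω) :
    BddAbove (range fun φ : {φ : E → ℝ // LipschitzWith 1 φ} =>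
      ∫ x, φ.1 x ∂μ - ∫ x, φ.1 x ∂ν) := by
  have := hμ.1
  obtain ⟨x₀⟩ : Nonempty E := nonempty_of_isProbabilityMeasure μ
  obtain ⟨r, hr⟩ := hΩ.subset_closedBall x₀
  refine ⟨2 * r, forall_mem_range.2 fun φ => ?_⟩
  have h₁ := abs_integral_sub_le_of_subset_closedBall hr hμ φ.2
  have h₂ := abs_integral_sub_le_of_subset_closedBall hr hν φ.2
  rw [abs_le] at h₁ h₂
  linarith [h₁.2, h₂.1]

theorem integral_sub_integral_le_W1 (hΩ : Bornology.IsBounded Ω) (hμ : μ ∈ ProbOn Ω)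
    (hν : ν ∈ ProbOn Ω) {φ : E → ℝ} (hφ : LipschitzWith 1 φ) :
    ∫ x, φ x ∂μ - ∫ x, φ x ∂ν ≤ W1 μ ν :=
  le_ciSup (f := fun φ : {φ : E → ℝ // LipschitzWith 1 φ} => ∫ x, φ.1 x ∂μ - ∫ x, φ.1 x ∂ν)
    (bddAbove_W1 hΩ hμ hν) ⟨φ, hφ⟩

theorem integral_sub_integral_le_mul_W1 (hΩ : Bornology.IsBounded Ω) (hμ : μ ∈ ProbOn Ω)
    (hν : ν ∈ ProbOn Ω) {K : ℝ≥0} {ψ : E → ℝ} (hψ : LipschitzWith K ψ) :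
    ∫ x, ψ x ∂μ - ∫ x, ψ x ∂ν ≤ K * W1 μ ν := by
  rcases eq_or_ne K 0 with rfl | hK
  · have := hμ.1
    have := hν.1
    obtain ⟨x₀⟩ : Nonempty E := nonempty_of_isProbabilityMeasure μ
    have hconst : ψ = fun _ => ψ x₀ := funext fun x => by
      simpa using hψ.dist_le_mul x x₀
    rw [hconst]
    simp
  · have h := integral_sub_integral_le_W1 hΩ hμ hν (φ := fun x => (K : ℝ)⁻¹ * ψ x) ?_
    · rw [integral_const_mul, integral_const_mul, ← mul_sub,
        inv_mul_le_iff₀ (by positivity)] at h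
      exact h
    · refine LipschitzWith.of_dist_le_mul fun x y => ?_
      rw [Real.dist_eq, ← mul_sub, abs_mul, abs_inv, NNReal.abs_eq, NNReal.coe_one, one_mul,
        inv_mul_le_iff₀ (by positivity), ← Real.dist_eq]
      exact hψ.dist_le_mul x y

theorem abs_integral_sub_integral_le_mul_W1 (hΩ : Bornology.IsBounded Ω) (hμ : μ ∈ ProbOn Ω)
    (hν : ν ∈ ProbOn Ω) {K : ℝ≥0} {ψ : E → ℝ} (hψ : LipschitzWith K ψ) :
    |∫ x, ψ x ∂μ - ∫ x, ψ x ∂ν| ≤ K * W1 μ ν := by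
  refine abs_le.2 ⟨?_, integral_sub_integral_le_mul_W1 hΩ hμ hν hψ⟩
  have h := integral_sub_integral_le_mul_W1 hΩ hμ hν hψ.neg
  simp only [Pi.neg_apply, integral_neg] at h
  linarith

end Wasserstein

namespace TearMap

noncomputable section

def hat (t : ℝ) : ℝ := max 0 (1 - 4 * |t - 1|)

theorem hat_nonneg (t : ℝ) : 0 ≤ hat t := le_max_left _ _

theorem hat_le_one (t : ℝ) : hat t ≤ 1 := max_le zero_le_one (by linarith [abs_nonneg (t - 1)])

theorem hat_one : hat 1 = 1 := by norm_num [hat]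

theorem hat_zero : hat 0 = 0 := by norm_num [hat]

theorem mem_Ioo_of_hat_ne_zero {t : ℝ} (h : hat t ≠ 0) : t ∈ Ioo (3 / 4) (5 / 4) := by
  have h' : 0 < 1 - 4 * |t - 1| := by
    by_contra hle
    exact h (max_eq_left (not_lt.1 hle))
  have := abs_lt.1 (show |t - 1| < 1 / 4 by linarith)
  constructor <;> linarith

theorem lipschitzWith_hat : LipschitzWith 4 hat := by
  refine LipschitzWith.const_max (LipschitzWith.of_dist_le_mul fun s t => ?_) 0
  rw [Real.dist_eq, Real.dist_eq, show 1 - 4 * |s - 1| - (1 - 4 * |t - 1|)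
    = 4 * (|t - 1| - |s - 1|) by ring, abs_mul, abs_sub_comm s t]
  norm_num
  simpa using abs_abs_sub_abs_le_abs_sub (t - 1) (s - 1)

def gate (r : ℝ) : ℝ := max 0 (min 1 (2 - r))

theorem gate_nonneg (r : ℝ) : 0 ≤ gate r := le_max_left _ _

theorem gate_le_one (r : ℝ) : gate r ≤ 1 := max_le zero_le_one (min_le_left _ _)

theorem gate_of_le_one {r : ℝ} (h : r ≤ 1) : gate r = 1 := by
  simp [gate, min_eq_left (show (1 : ℝ) ≤ 2 - r by linarith)]

theorem gate_mul_le_two (r : ℝ) : gate r * r ≤ 2 := by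
  rcases le_or_gt 2 r with h | h
  · simp [gate, min_eq_right (show 2 - r ≤ 1 by linarith), max_eq_left (show 2 - r ≤ 0 by linarith)]
  · rcases le_or_gt r 0 with h' | h'
    · nlinarith [gate_nonneg r]
    · nlinarith [gate_le_one r]

theorem lipschitzWith_gate : LipschitzWith 1 gate :=
  LipschitzWith.const_max (LipschitzWith.const_min (LipschitzWith.of_dist_le_mul fun s t => by
    rw [Real.dist_eq, Real.dist_eq, show 2 - s - (2 - t) = t - s by ring, abs_sub_comm]
    simp) 1) 0

def center (j : ℕ) : ℝ := (1 / 2) ^ j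

theorem center_pos (j : ℕ) : 0 < center j := by unfold center; positivity

theorem center_injective : Function.Injective center :=
  pow_right_injective₀ (by norm_num) (by norm_num)

theorem center_mem_Icc (k : ℕ) : center k ∈ Icc (-3 : ℝ) 3 := by
  have h₀ := center_pos k
  have h₁ : center k ≤ 1 := pow_le_one₀ (by norm_num) (by norm_num)
  constructor <;> linarith

def bump (j : ℕ) (x : ℝ) : ℝ := hat (2 ^ j * x)

theorem bump_nonneg (j : ℕ) (x : ℝ) : 0 ≤ bump j x := hat_nonneg _

theorem bump_le_one (j : ℕ) (x : ℝ) : bump j x ≤ 1 := hat_le_one _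

theorem bump_center (j : ℕ) : bump j (center j) = 1 := by
  simp [bump, center, hat_one]

theorem bump_zero (j : ℕ) : bump j 0 = 0 := by simp [bump, hat_zero]

theorem lipschitzWith_bump (j : ℕ) : LipschitzWith (4 * 2 ^ j) (bump j) :=
  lipschitzWith_hat.comp (LipschitzWith.of_dist_le_mul fun x y => by
    simp [Real.dist_eq, ← mul_sub, abs_mul])

theorem mem_Ioo_of_bump_ne_zero {j : ℕ} {x : ℝ} (h : bump j x ≠ 0) :
    2 ^ j * x ∈ Ioo (3 / 4) (5 / 4) :=
  mem_Ioo_of_hat_ne_zero h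

theorem pos_and_lt_of_bump_ne_zero {j : ℕ} {x : ℝ} (h : bump j x ≠ 0) : 0 < x ∧ x < 5 / 4 := by
  obtain ⟨h₁, h₂⟩ := mem_Ioo_of_bump_ne_zero h
  have hj : (1 : ℝ) ≤ 2 ^ j := one_le_pow₀ one_le_two
  have hx : 0 < x := pos_of_mul_pos_right (a := (2 : ℝ) ^ j) (by linarith) (by positivity)
  exact ⟨hx, by nlinarith⟩

theorem bump_eq_zero_of_lt {j k : ℕ} (hjk : j < k) {x : ℝ} (h : bump j x ≠ 0) :
    bump k x = 0 := by
  by_contra h'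
  obtain ⟨hj, -⟩ := mem_Ioo_of_bump_ne_zero h
  obtain ⟨-, hk⟩ := mem_Ioo_of_bump_ne_zero h'
  have hx := (pos_and_lt_of_bump_ne_zero h).1
  have h2 : 2 * 2 ^ j ≤ (2 : ℝ) ^ k := by
    rw [← pow_succ']
    exact pow_le_pow_right₀ one_le_two hjk
  nlinarith

theorem bump_eq_zero_of_ne {j k : ℕ} (hjk : j ≠ k) {x : ℝ} (h : bump j x ≠ 0) :
    bump k x = 0 := by
  rcases hjk.lt_or_gt with hlt | hlt
  · exact bump_eq_zero_of_lt hlt h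
  · by_contra h'
    exact h (bump_eq_zero_of_lt hlt h')

theorem sum_bump_le_one (s : Finset ℕ) (x : ℝ) : ∑ j ∈ s, bump j x ≤ 1 := by
  by_cases h : ∃ j ∈ s, bump j x ≠ 0
  · obtain ⟨j, hj, hne⟩ := h
    rw [Finset.sum_eq_single_of_mem j hj fun k _ hk => bump_eq_zero_of_ne hk.symm hne]
    exact bump_le_one j x
  · push Not at h
    rw [Finset.sum_eq_zero h]
    exact zero_le_one

def weight (j : ℕ) : ℝ := (1 / 2) ^ j / 8

theorem weight_pos (j : ℕ) : 0 < weight j := by unfold weight; positivity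

theorem summable_weight : Summable weight := summable_geometric_two.div_const 8

theorem tsum_weight : ∑' j, weight j = 1 / 4 := by
  rw [show weight = fun j => (1 / 2 : ℝ) ^ j / 8 from rfl, tsum_div_const, tsum_geometric_two]
  norm_num

def mass (j : ℕ) (μ : Measure ℝ) : ℝ := ∫ x, bump j x ∂μ

def gain (j : ℕ) (μ : Measure ℝ) : ℝ := gate (mass j μ / weight j)

def shiftTerm (j : ℕ) (μ : Measure ℝ) (x : ℝ) : ℝ := gain j μ * bump j x

def shift (μ : Measure ℝ) (x : ℝ) : ℝ := ∑' j, shiftTerm j μ x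

def tear (μ : Measure ℝ) (x : ℝ) : ℝ := x + shift μ x

def tearMap (μ : Measure ℝ) : Measure ℝ := μ.map (tear μ)

def partialTear (J : ℕ) (μ : Measure ℝ) (x : ℝ) : ℝ := x + ∑ j ∈ Finset.range J, shiftTerm j μ x

def shiftTail (J : ℕ) (μ : Measure ℝ) (x : ℝ) : ℝ := ∑' k, shiftTerm (k + J) μ x

variable {μ ν : Measure ℝ}

theorem gain_mul_mass_le (j : ℕ) (μ : Measure ℝ) : gain j μ * mass j μ ≤ 2 * weight j := by
  have h := gate_mul_le_two (mass j μ / weight j)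
  rwa [mul_div_assoc', div_le_iff₀ (weight_pos j)] at h

theorem gain_nonneg (j : ℕ) (μ : Measure ℝ) : 0 ≤ gain j μ := gate_nonneg _

theorem gain_le_one (j : ℕ) (μ : Measure ℝ) : gain j μ ≤ 1 := gate_le_one _

theorem shiftTerm_nonneg (j : ℕ) (μ : Measure ℝ) (x : ℝ) : 0 ≤ shiftTerm j μ x :=
  mul_nonneg (gain_nonneg j μ) (bump_nonneg j x)

theorem shiftTerm_le_bump (j : ℕ) (μ : Measure ℝ) (x : ℝ) : shiftTerm j μ x ≤ bump j x :=
  mul_le_of_le_one_left (bump_nonneg j x) (gain_le_one j μ)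

theorem sum_shiftTerm_le_one (s : Finset ℕ) (μ : Measure ℝ) (x : ℝ) :
    ∑ j ∈ s, shiftTerm j μ x ≤ 1 :=
  (Finset.sum_le_sum fun j _ => shiftTerm_le_bump j μ x).trans (sum_bump_le_one s x)

theorem summable_shiftTerm (μ : Measure ℝ) (x : ℝ) : Summable fun j => shiftTerm j μ x :=
  summable_of_sum_range_le (shiftTerm_nonneg · μ x) fun _ => sum_shiftTerm_le_one _ μ x

theorem shift_nonneg (μ : Measure ℝ) (x : ℝ) : 0 ≤ shift μ x :=
  tsum_nonneg (shiftTerm_nonneg · μ x)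

theorem shift_le_one (μ : Measure ℝ) (x : ℝ) : shift μ x ≤ 1 :=
  Real.tsum_le_of_sum_range_le (shiftTerm_nonneg · μ x) fun _ => sum_shiftTerm_le_one _ μ x

theorem pos_and_lt_of_shift_ne_zero {x : ℝ} (h : shift μ x ≠ 0) : 0 < x ∧ x < 5 / 4 := by
  by_contra hx
  have hzero : ∀ j, shiftTerm j μ x = 0 := fun j => by
    by_contra hj
    exact hx (pos_and_lt_of_bump_ne_zero (right_ne_zero_of_mul hj))
  exact h (by simp [shift, hzero])

theorem measurable_shift (μ : Measure ℝ) : Measurable (shift μ) :=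
  Measurable.tsum fun j => (measurable_const.mul (lipschitzWith_bump j).continuous.measurable)

theorem measurable_tear (μ : Measure ℝ) : Measurable (tear μ) :=
  measurable_id.add (measurable_shift μ)

theorem continuous_partialTear (J : ℕ) (μ : Measure ℝ) : Continuous (partialTear J μ) :=
  continuous_id.add (continuous_finsetSum _ fun j _ =>
    continuous_const.mul (lipschitzWith_bump j).continuous)

theorem tear_mem_Icc {x : ℝ} (hx : x ∈ Icc (-3 : ℝ) 3) : tear μ x ∈ Icc (-3 : ℝ) 3 := by
  have h₀ := shift_nonneg μ x
  have h₁ := shift_le_one μ x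
  refine ⟨by unfold tear; linarith [hx.1], ?_⟩
  by_cases h : shift μ x = 0
  · simpa [tear, h] using hx.2
  · have := (pos_and_lt_of_shift_ne_zero h).2
    unfold tear; linarith

theorem abs_partialTear_le (J : ℕ) (μ : Measure ℝ) (x : ℝ) : |partialTear J μ x| ≤ |x| + 1 := by
  have h₀ := Finset.sum_nonneg fun j (_ : j ∈ Finset.range J) => shiftTerm_nonneg j μ x
  have h₁ := sum_shiftTerm_le_one (Finset.range J) μ x
  exact (abs_add_le _ _).trans (by rw [abs_of_nonneg h₀]; linarith)

theorem tear_eq_partialTear_add_shiftTail (J : ℕ) (μ : Measure ℝ) (x : ℝ) :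
    tear μ x = partialTear J μ x + shiftTail J μ x := by
  rw [tear, partialTear, shift, shiftTail, add_assoc,
    (summable_shiftTerm μ x).sum_add_tsum_nat_add J]

theorem shiftTail_nonneg (J : ℕ) (μ : Measure ℝ) (x : ℝ) : 0 ≤ shiftTail J μ x :=
  tsum_nonneg fun _ => shiftTerm_nonneg _ μ x

theorem shiftTail_le_one (J : ℕ) (μ : Measure ℝ) (x : ℝ) : shiftTail J μ x ≤ 1 := by
  have h := tear_eq_partialTear_add_shiftTail J μ x
  have h₀ := Finset.sum_nonneg fun j (_ : j ∈ Finset.range J) => shiftTerm_nonneg j μ x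
  rw [tear, partialTear] at h
  linarith [shift_le_one μ x]

theorem dist_tear_partialTear (J : ℕ) (μ : Measure ℝ) (x : ℝ) :
    dist (tear μ x) (partialTear J μ x) = shiftTail J μ x := by
  rw [tear_eq_partialTear_add_shiftTail J, Real.dist_eq, add_sub_cancel_left,
    abs_of_nonneg (shiftTail_nonneg J μ x)]

theorem abs_shiftTerm_sub_le (j : ℕ) (μ : Measure ℝ) (x y : ℝ) :
    |shiftTerm j μ x - shiftTerm j μ y| ≤ 4 * 2 ^ j * |x - y| := by
  have h := (lipschitzWith_bump j).dist_le_mul x y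
  push_cast [Real.dist_eq] at h
  rw [shiftTerm, shiftTerm, ← mul_sub, abs_mul, abs_of_nonneg (gain_nonneg j μ)]
  exact (mul_le_of_le_one_left (abs_nonneg _) (gain_le_one j μ)).trans h

theorem exists_lipschitzWith_partialTear (J : ℕ) :
    ∃ L, ∀ μ : Measure ℝ, LipschitzWith L (partialTear J μ) := by
  refine ⟨Real.toNNReal (1 + ∑ j ∈ Finset.range J, 4 * 2 ^ j), fun μ =>
    LipschitzWith.of_dist_le' fun x y => ?_⟩
  rw [Real.dist_eq, Real.dist_eq, partialTear, partialTear, add_mul, one_mul, Finset.sum_mul,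
    add_sub_add_comm, ← Finset.sum_sub_distrib]
  exact (abs_add_le _ _).trans (add_le_add le_rfl ((Finset.abs_sum_le_sum_abs _ _).trans
    (Finset.sum_le_sum fun j _ => abs_shiftTerm_sub_le j μ x y)))

variable {Ω : Set ℝ}

theorem abs_mass_sub_mass_le (hΩ : Bornology.IsBounded Ω) (hμ : μ ∈ ProbOn Ω)
    (hν : ν ∈ ProbOn Ω) (j : ℕ) : |mass j μ - mass j ν| ≤ 4 * 2 ^ j * W1 μ ν := by
  simpa [mass] using abs_integral_sub_integral_le_mul_W1 hΩ hμ hν (lipschitzWith_bump j)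

theorem abs_shiftTerm_sub_shiftTerm_le (hΩ : Bornology.IsBounded Ω) (hμ : μ ∈ ProbOn Ω)
    (hν : ν ∈ ProbOn Ω) (j : ℕ) (x : ℝ) :
    |shiftTerm j μ x - shiftTerm j ν x| ≤ 4 * 2 ^ j / weight j * W1 μ ν := by
  have hgate := lipschitzWith_gate.dist_le_mul (mass j μ / weight j) (mass j ν / weight j)
  rw [NNReal.coe_one, one_mul, Real.dist_eq, Real.dist_eq, ← sub_div, abs_div,
    abs_of_pos (weight_pos j)] at hgate
  rw [shiftTerm, shiftTerm, ← sub_mul, abs_mul, abs_of_nonneg (bump_nonneg j x), div_mul_eq_mul_div]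
  refine (mul_le_of_le_one_right (abs_nonneg _) (bump_le_one j x)).trans (hgate.trans ?_)
  exact div_le_div_of_nonneg_right (abs_mass_sub_mass_le hΩ hμ hν j) (weight_pos j).le

theorem exists_dist_partialTear_le (hΩ : Bornology.IsBounded Ω) (J : ℕ) :
    ∃ C, 0 ≤ C ∧ ∀ μ ∈ ProbOn Ω, ∀ ν ∈ ProbOn Ω, ∀ x,
      dist (partialTear J μ x) (partialTear J ν x) ≤ C * W1 μ ν := by
  refine ⟨∑ j ∈ Finset.range J, 4 * 2 ^ j / weight j,
    Finset.sum_nonneg fun j _ => div_nonneg (by positivity) (weight_pos j).le,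
    fun μ hμ ν hν x => ?_⟩
  rw [Real.dist_eq, partialTear, partialTear, add_sub_add_left_eq_sub,
    ← Finset.sum_sub_distrib, Finset.sum_mul]
  exact (Finset.abs_sum_le_sum_abs _ _).trans
    (Finset.sum_le_sum fun j _ => abs_shiftTerm_sub_shiftTerm_le hΩ hμ hν j x)

theorem integral_shiftTail_le (hΩ : Bornology.IsBounded Ω) (hμ : μ ∈ ProbOn Ω) (J : ℕ) :
    ∫ x, shiftTail J μ x ∂μ ≤ ∑' k, 2 * weight (k + J) := by
  have hint k : Integrable (shiftTerm (k + J) μ) μ :=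
    ((lipschitzWith_bump (k + J)).integrable_of_mem_probOn hΩ hμ).const_mul _
  have hle k : ∫ x, shiftTerm (k + J) μ x ∂μ ≤ 2 * weight (k + J) := by
    simp only [shiftTerm, integral_const_mul]
    exact gain_mul_mass_le _ μ
  have hsum : Summable fun k => 2 * weight (k + J) :=
    ((summable_nat_add_iff J).2 summable_weight).mul_left 2
  have hsum' : Summable fun k => ∫ x, shiftTerm (k + J) μ x ∂μ :=
    hsum.of_nonneg_of_le (fun k => integral_nonneg fun x => shiftTerm_nonneg _ μ x) hle
  have hnorm k : ∫ x, ‖shiftTerm (k + J) μ x‖ ∂μ = ∫ x, shiftTerm (k + J) μ x ∂μ := by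
    simp only [Real.norm_of_nonneg (shiftTerm_nonneg _ μ _)]
  simp only [shiftTail]
  rw [← integral_tsum_of_summable_integral_norm hint (by simpa only [hnorm] using hsum')]
  exact hsum'.tsum_le_tsum hle hsum

theorem tearMap_mem_probOn (hμ : μ ∈ ProbOn (Icc (-3 : ℝ) 3)) :
    tearMap μ ∈ ProbOn (Icc (-3 : ℝ) 3) := by
  have := hμ.1
  refine ⟨Measure.isProbabilityMeasure_map (measurable_tear μ).aemeasurable, ?_⟩
  rw [tearMap, Measure.map_apply (measurable_tear μ) measurableSet_Icc.compl]
  exact measure_mono_null (fun x hx hxΩ => hx (tear_mem_Icc hxΩ)) hμ.2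

theorem tearMap_supportPreserving : SupportPreservingProb (Icc (-3 : ℝ) 3) tearMap := by
  intro n _ x hx
  set μ := ∑ i, ((n : ℝ≥0∞))⁻¹ • Measure.dirac (x i)
  refine ⟨fun i => tear μ (x i), fun i => tear_mem_Icc (hx i), ?_,
    fun i j hij => by simp only [hij]⟩
  rw [tearMap, Measure.map_finset_sum' (measurable_tear μ).aemeasurable]
  simp only [Measure.map_smul, Measure.map_dirac' (measurable_tear μ)]

theorem integrable_comp_tear (hμ : μ ∈ ProbOn (Icc (-3 : ℝ) 3)) (ρ : Measure ℝ) {φ : ℝ → ℝ}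
    (hφ : LipschitzWith 1 φ) : Integrable (fun x => φ (tear ρ x)) μ :=
  hφ.integrable_comp_of_mem_probOn hμ (measurable_tear ρ)
    (isBounded_Icc (-3) 3 |>.subset (image_subset_iff.2 fun _ => tear_mem_Icc))

theorem integrable_comp_partialTear (hμ : μ ∈ ProbOn (Icc (-3 : ℝ) 3)) (J : ℕ) (ρ : Measure ℝ)
    {φ : ℝ → ℝ} (hφ : LipschitzWith 1 φ) : Integrable (fun x => φ (partialTear J ρ x)) μ := by
  refine hφ.integrable_comp_of_mem_probOn hμ (continuous_partialTear J ρ).measurable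
    (isBounded_iff_forall_norm_le.2 ⟨4, forall_mem_image.2 fun x hx => ?_⟩)
  have := abs_partialTear_le J ρ x
  have := abs_le.2 ⟨hx.1, hx.2⟩
  rw [Real.norm_eq_abs]
  linarith

theorem integrable_dist_tear_partialTear (hμ : μ ∈ ProbOn (Icc (-3 : ℝ) 3)) (J : ℕ) :
    Integrable (fun x => dist (tear μ x) (partialTear J μ x)) μ := by
  refine integrable_of_forall_mem_abs_le hμ ((measurable_tear μ).dist
    (continuous_partialTear J μ).measurable).aestronglyMeasurable (C := 1) fun x _ => ?_
  rw [dist_tear_partialTear, abs_of_nonneg (shiftTail_nonneg J μ x)]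
  exact shiftTail_le_one J μ x

theorem exists_W1_tearMap_le (J : ℕ) : ∃ C, 0 ≤ C ∧ ∀ μ ∈ ProbOn (Icc (-3 : ℝ) 3),
    ∀ ν ∈ ProbOn (Icc (-3 : ℝ) 3),
      W1 (tearMap μ) (tearMap ν) ≤ 2 * ∑' k, 2 * weight (k + J) + C * W1 μ ν := by
  obtain ⟨L, hL⟩ := exists_lipschitzWith_partialTear J
  obtain ⟨C, hC₀, hC⟩ := exists_dist_partialTear_le (isBounded_Icc (-3 : ℝ) 3) J
  refine ⟨L + C, by positivity, fun μ hμ ν hν => W1_le_of_forall fun φ hφ => ?_⟩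
  have := hν.1
  have hpartial : Integrable (fun x => dist (partialTear J μ x) (partialTear J ν x)) ν :=
    integrable_of_forall_mem_abs_le hν ((continuous_partialTear J μ).dist
      (continuous_partialTear J ν)).aestronglyMeasurable fun x _ =>
        (abs_of_nonneg dist_nonneg).trans_le (hC μ hμ ν hν x)
  rw [tearMap, tearMap, integral_map (measurable_tear μ).aemeasurable
    hφ.continuous.aestronglyMeasurable, integral_map (measurable_tear ν).aemeasurable
    hφ.continuous.aestronglyMeasurable]
  have h₁ := (integral_comp_sub_integral_comp_le hφ (integrable_comp_tear hμ μ hφ)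
    (integrable_comp_partialTear hμ J μ hφ) (integrable_dist_tear_partialTear hμ J)).trans_eq
    (integral_congr_ae (ae_of_all _ (dist_tear_partialTear J μ)))
  have h₂ := integral_sub_integral_le_mul_W1 (isBounded_Icc (-3 : ℝ) 3) hμ hν (hφ.comp (hL μ))
  have h₃ := (integral_comp_sub_integral_comp_le hφ (integrable_comp_partialTear hν J μ hφ)
    (integrable_comp_partialTear hν J ν hφ) hpartial).trans
    (integral_mono hpartial (integrable_const _) (hC μ hμ ν hν))
  have h₄ := (integral_comp_sub_integral_comp_le hφ (integrable_comp_partialTear hν J ν hφ)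
    (integrable_comp_tear hν ν hφ)
    ((integrable_dist_tear_partialTear hν J).congr (ae_of_all _ fun x => dist_comm _ _))).trans_eq
    (integral_congr_ae (ae_of_all _ fun x => (dist_comm _ _).trans (dist_tear_partialTear J ν x)))
  have h₅ := integral_shiftTail_le (isBounded_Icc (-3 : ℝ) 3) hμ J
  have h₆ := integral_shiftTail_le (isBounded_Icc (-3 : ℝ) 3) hν J
  simp only [integral_const, probReal_univ, smul_eq_mul, one_mul, Function.comp_apply] at h₂ h₃
  linarith

theorem tearMap_continuous (hμ : μ ∈ ProbOn (Icc (-3 : ℝ) 3)) {ε : ℝ} (hε : 0 < ε) :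
    ∃ δ > 0, ∀ ν ∈ ProbOn (Icc (-3 : ℝ) 3), W1 μ ν < δ → W1 (tearMap μ) (tearMap ν) < ε := by
  obtain ⟨J, hJ⟩ := ((tendsto_order.1 (tendsto_sum_nat_add fun k => 2 * weight k)).2
    (ε / 4) (by positivity)).exists
  obtain ⟨C, hC₀, hC⟩ := exists_W1_tearMap_le J
  refine ⟨ε / 2 / (C + 1), by positivity, fun ν hν hW => ?_⟩
  have hCδ : C * (ε / 2 / (C + 1)) ≤ ε / 2 := by
    rw [mul_div_assoc', div_le_iff₀ (by positivity)]
    nlinarith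
  have := mul_le_mul_of_nonneg_left hW.le hC₀
  linarith [hC μ hμ ν hν]

def witness : Measure ℝ :=
  ENNReal.ofReal (3 / 4) • Measure.dirac 0 +
    Measure.sum fun k => ENNReal.ofReal (weight k) • Measure.dirac (center k)

theorem witness_compl_atoms : witness (insert 0 (range center))ᶜ = 0 := by
  have hs : MeasurableSet (insert 0 (range center))ᶜ :=
    ((countable_range center).insert 0).measurableSet.compl
  simp [witness, Measure.sum_apply _ hs, Measure.dirac_apply' _ hs]

theorem witness_mem_probOn : witness ∈ ProbOn (Icc (-3 : ℝ) 3) := by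
  refine ⟨⟨?_⟩, measure_mono_null ?_ witness_compl_atoms⟩
  · simp only [witness, Measure.add_apply, Measure.smul_apply,
      Measure.sum_apply _ MeasurableSet.univ, measure_univ, smul_eq_mul, mul_one]
    rw [← ENNReal.ofReal_tsum_of_nonneg (fun k => (weight_pos k).le) summable_weight, tsum_weight,
      ← ENNReal.ofReal_add (by norm_num) (by norm_num)]
    norm_num
  · refine compl_subset_compl.2 (insert_subset ⟨by norm_num, by norm_num⟩ ?_)
    exact range_subset_iff.2 center_mem_Icc

theorem ofReal_le_witness_zero : ENNReal.ofReal (3 / 4) ≤ witness {0} := by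
  simp [witness]

theorem witness_center_pos (k : ℕ) : 0 < witness {center k} := by
  refine lt_of_lt_of_le ?_ ((Measure.le_sum _ k).trans (Measure.le_add_left le_rfl) {center k})
  simp [weight_pos]

theorem mass_witness (j : ℕ) : mass j witness = weight j := by
  rw [mass, integral_eq_lintegral_of_nonneg_ae (ae_of_all _ (bump_nonneg j))
    (lipschitzWith_bump j).continuous.aestronglyMeasurable]
  simp only [witness, lintegral_add_measure, lintegral_smul_measure, lintegral_dirac,
    lintegral_sum_measure, bump_zero, ENNReal.ofReal_zero, smul_eq_mul, mul_zero, zero_add]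
  rw [tsum_eq_single j fun k hk => by
    rw [bump_eq_zero_of_ne hk (by simp [bump_center]), ENNReal.ofReal_zero, mul_zero]]
  simp [bump_center, (weight_pos j).le]

theorem gain_witness (j : ℕ) : gain j witness = 1 := by
  rw [gain, mass_witness, div_self (weight_pos j).ne', gate_of_le_one le_rfl]

theorem tear_zero (μ : Measure ℝ) : tear μ 0 = 0 := by
  simp [tear, shift, shiftTerm, bump_zero]

theorem tear_witness_center (k : ℕ) : tear witness (center k) = center k + 1 := by
  rw [tear, shift, tsum_eq_single k fun j hj => by
    rw [shiftTerm, bump_eq_zero_of_ne hj.symm (by simp [bump_center]), mul_zero]]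
  rw [shiftTerm, gain_witness, bump_center, mul_one]

variable {g : ℝ → ℝ}

theorem aemeasurable_of_map_eq (hg : witness.map g = tearMap witness) :
    AEMeasurable g witness := by
  by_contra h
  have := (tearMap_mem_probOn witness_mem_probOn).1
  rw [Measure.map_of_not_aemeasurable h] at hg
  exact IsProbabilityMeasure.ne_zero _ hg.symm

theorem aemeasurable_tear_witness : AEMeasurable (tear witness) witness :=
  (measurable_tear witness).aemeasurable

/-- Both pushforwards of the atom `0`, of mass `3/4 > 1/2`, must land on the same point. -/
theorem eq_zero_of_map_eq (hg : witness.map g = tearMap witness) : g 0 = 0 := by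
  by_contra hne
  have h₁ : ENNReal.ofReal (3 / 4) ≤ tearMap witness {g 0} := hg ▸ ofReal_le_witness_zero.trans
    (measure_singleton_le_map_apply_singleton (aemeasurable_of_map_eq hg) 0)
  have h₂ : ENNReal.ofReal (3 / 4) ≤ tearMap witness {0} := by
    have := measure_singleton_le_map_apply_singleton aemeasurable_tear_witness 0
    rw [tear_zero] at this
    exact ofReal_le_witness_zero.trans this
  have := (tearMap_mem_probOn witness_mem_probOn).1
  have h₃ := prob_le_one (μ := tearMap witness) (s := {g 0} ∪ {0})
  rw [measure_union (disjoint_singleton.2 hne) (measurableSet_singleton 0)] at h₃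
  have h₄ := (add_le_add h₁ h₂).trans h₃
  rw [← ENNReal.ofReal_add (by norm_num) (by norm_num)] at h₄
  norm_num at h₄

theorem exists_center_eq_of_map_eq (hg : witness.map g = tearMap witness) (k : ℕ) :
    ∃ j, g (center j) = center k + 1 := by
  by_contra h
  push Not at h
  have hpos : 0 < tearMap witness {center k + 1} := by
    have := measure_singleton_le_map_apply_singleton aemeasurable_tear_witness (center k)
    rw [tear_witness_center] at this
    exact (witness_center_pos k).trans_le this
  rw [← hg, Measure.map_apply_of_aemeasurable (aemeasurable_of_map_eq hg)
    (measurableSet_singleton _)] at hpos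
  refine hpos.ne' (measure_mono_null ?_ witness_compl_atoms)
  rintro x hx (rfl | ⟨j, rfl⟩)
  · rw [mem_preimage, eq_zero_of_map_eq hg, mem_singleton_iff] at hx
    linarith [center_pos k]
  · exact h j hx

theorem not_continuousWithinAt_of_map_eq (hg : witness.map g = tearMap witness) :
    ¬ ContinuousWithinAt g (Icc (-3 : ℝ) 3) 0 := by
  intro hc
  choose j hj using exists_center_eq_of_map_eq hg
  have hinj : Function.Injective j := fun a b hab =>
    center_injective (add_right_cancel ((hj a).symm.trans (hab ▸ hj b)))
  have hcenter : Tendsto center atTop (𝓝[Icc (-3 : ℝ) 3] 0) :=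
    tendsto_nhdsWithin_iff.2 ⟨tendsto_pow_atTop_nhds_zero_of_lt_one (by norm_num) (by norm_num),
      Eventually.of_forall center_mem_Icc⟩
  have hj_top : Tendsto j atTop atTop := by
    simpa [Nat.cofinite_eq_atTop] using hinj.tendsto_cofinite
  have h₀ : Tendsto (fun k => g (center (j k))) atTop (𝓝 0) :=
    eq_zero_of_map_eq hg ▸ hc.tendsto.comp (hcenter.comp hj_top)
  have h₁ : Tendsto (fun k => center k + 1) atTop (𝓝 1) := by
    have := (tendsto_pow_atTop_nhds_zero_of_lt_one (by norm_num : (0 : ℝ) ≤ 1 / 2)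
      (by norm_num)).add_const 1
    rwa [zero_add] at this
  simp only [hj] at h₀
  exact zero_ne_one (tendsto_nhds_unique h₀ h₁)

end

end TearMap

open TearMap in
/-- On `Ω = [-3,3] ⊆ ℝ` there exists a support-preserving map
`f : P(Ω) → P(Ω)` that is continuous in the 1-Wasserstein topology, but which is not of the
form `f(μ) = G(μ,·)_♯ μ` for any continuous in-context map `G : P(Ω) × Ω → Ω`. -/
theorem exists_supportPreserving_not_inContext :
    ∃ f : Measure ℝ → Measure ℝ,
      (∀ μ ∈ ProbOn (Set.Icc (-3 : ℝ) 3), f μ ∈ ProbOn (Set.Icc (-3 : ℝ) 3)) ∧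
      (∀ μ ∈ ProbOn (Set.Icc (-3 : ℝ) 3), ∀ ε > (0 : ℝ), ∃ δ > (0 : ℝ),
        ∀ ν ∈ ProbOn (Set.Icc (-3 : ℝ) 3), W1 μ ν < δ → W1 (f μ) (f ν) < ε) ∧
      SupportPreservingProb (Set.Icc (-3 : ℝ) 3) f ∧
      ¬ ∃ G : Measure ℝ → ℝ → ℝ,
          (∀ μ ∈ ProbOn (Set.Icc (-3 : ℝ) 3), ∀ x ∈ Set.Icc (-3 : ℝ) 3,
            G μ x ∈ Set.Icc (-3 : ℝ) 3) ∧
          (∀ μ ∈ ProbOn (Set.Icc (-3 : ℝ) 3), ∀ x ∈ Set.Icc (-3 : ℝ) 3, ∀ ε > (0 : ℝ),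
            ∃ δ > (0 : ℝ), ∀ ν ∈ ProbOn (Set.Icc (-3 : ℝ) 3), ∀ y ∈ Set.Icc (-3 : ℝ) 3,
              W1 μ ν + dist x y < δ → dist (G μ x) (G ν y) < ε) ∧
          (∀ μ ∈ ProbOn (Set.Icc (-3 : ℝ) 3), f μ = Measure.map (G μ) μ) := by
  refine ⟨tearMap, fun μ => tearMap_mem_probOn, fun μ hμ ε => tearMap_continuous hμ,
    tearMap_supportPreserving, ?_⟩
  rintro ⟨G, -, hG, hmap⟩
  refine not_continuousWithinAt_of_map_eq (hmap witness witness_mem_probOn).symm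
    (Metric.continuousWithinAt_iff.2 fun ε hε => ?_)
  obtain ⟨δ, hδ, h⟩ := hG witness witness_mem_probOn 0 ⟨by norm_num, by norm_num⟩ ε hε
  refine ⟨δ, hδ, fun y hy hdist => ?_⟩
  rw [dist_comm]
  exact h witness witness_mem_probOn y hy (by rwa [W1_self, zero_add, dist_comm])
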